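/- Let a group G act acylindrically by automorphisms on a tree T. Then for every geodesic line γ in T, the setwise stabilizer of γ in G is virtually cyclic. -/

import Mathlib

open Pointwise

/-- An action of a group `Γ` by automorphisms on a graph `T` is *acylindrical* if there
is an integer `k` such that the pointwise stabilizer of every injective path of length
`k` in `T` is finite. -/
def IsAcylindricalAction (Γ : Type*) [Group Γ] {V : Type*} [MulAction Γ V]
    (T : SimpleGraph V) : Prop :=
  ∃ k : ℕ, ∀ p : Fin (k + 1) → V, Function.Injective p →
    (∀ i : Fin k, T.Adj (p i.castSucc) (p i.succ)) →
    Set.Finite {g : Γ | ∀ i, g • p i = p i}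

/-- A group is *virtually cyclic* if it contains a finite-index cyclic subgroup. -/
def IsVirtuallyCyclic (G : Type*) [Group G] : Prop :=
  ∃ H : Subgroup G, H.FiniteIndex ∧ IsCyclic H

/-!
The stabilizer `S` of a geodesic line permutes the vertices of the line, and since a tree has no
edge between non-consecutive vertices of a geodesic, `S` acts on the indices `ℤ` by isometries
`n ↦ ±n + c`. The orientation-preserving elements form a subgroup of index at most two, on which
`c` is a homomorphism to `ℤ`. Its kernel fixes the line pointwise, hence is finite by
acylindricity, and a group with a finite-kernel homomorphism to a cyclic group is virtually cyclic.
-/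

theorem IsVirtuallyCyclic.of_finiteIndex {G : Type*} [Group G] {H : Subgroup G} [H.FiniteIndex]
    (h : IsVirtuallyCyclic H) : IsVirtuallyCyclic G := by
  obtain ⟨K, hK, hcyc⟩ := h
  refine ⟨K.map H.subtype, ⟨?_⟩, isCyclic_of_surjective _ (H.subtype.subgroupMap_surjective K)⟩
  rw [Subgroup.index_map_subtype]
  exact mul_ne_zero hK.index_ne_zero Subgroup.FiniteIndex.index_ne_zero

theorem isVirtuallyCyclic_of_finite_ker {G C : Type*} [Group G] [Group C] [IsCyclic C]
    (f : G →* C) (hf : (f.ker : Set G).Finite) : IsVirtuallyCyclic G := by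
  obtain ⟨⟨_, g, rfl⟩, hgen⟩ := IsCyclic.exists_generator (α := f.range)
  refine ⟨Subgroup.zpowers g, ?_, inferInstance⟩
  have : Finite f.ker := hf.to_subtype
  -- every coset of `⟨g⟩` meets the kernel, since `f g` generates the image of `f`
  have hsurj : Function.Surjective fun k : f.ker => (k : G ⧸ Subgroup.zpowers g) := by
    rintro ⟨x⟩
    obtain ⟨m, hm⟩ := Subgroup.mem_zpowers_iff.mp (hgen ⟨f x, x, rfl⟩)
    have hfx : f g ^ m = f x := congrArg Subtype.val hm
    refine ⟨⟨x * g ^ (-m), by simp [hfx]⟩, ?_⟩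
    exact QuotientGroup.eq.mpr (by simp [Subgroup.zpow_mem_zpowers])
  have : Finite (G ⧸ Subgroup.zpowers g) := Finite.of_surjective _ hsurj
  exact Subgroup.finiteIndex_of_finite_quotient

theorem Int.eq_add_mul_of_abs_sub_eq_one {f : ℤ → ℤ} (hf : Function.Injective f)
    (h : ∀ n, |f (n + 1) - f n| = 1) (n : ℤ) : f n = f 0 + (f 1 - f 0) * n := by
  have hstep : ∀ n, f (n + 1) = f n + 1 ∨ f (n + 1) = f n - 1 := fun n => by
    have := (abs_eq zero_le_one).mp (h n)
    omega
  -- two consecutive steps cannot go back and forth, as `f (n + 2) ≠ f n`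
  have hsame : ∀ n, f (n + 1 + 1) - f (n + 1) = f (n + 1) - f n := fun n => by
    have hne : f (n + 1 + 1) ≠ f n := fun e => by have := hf e; omega
    have := hstep n
    have := hstep (n + 1)
    omega
  have hconst : ∀ n, f (n + 1) - f n = f 1 - f 0 := fun n => by
    induction n using Int.induction_on with
    | zero => simp
    | succ k ih => rw [hsame, ih]
    | pred k ih => rw [← ih, ← hsame, sub_add_cancel]
  induction n using Int.induction_on with
  | zero => simp
  | succ k ih => linear_combination ih + hconst k
  | pred k ih =>
    have := hconst (-(k : ℤ) - 1)
    rw [sub_add_cancel] at this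
    linear_combination ih - this

def PreservesIntAdjacency (G : Type*) [Group G] [MulAction G ℤ] : Prop :=
  ∀ (g : G) (n : ℤ), |g • (n + 1) - g • n| = 1

namespace PreservesIntAdjacency

variable {G : Type*} [Group G] [MulAction G ℤ]

theorem smul_eq_add_mul (hG : PreservesIntAdjacency G) (g : G) (n : ℤ) :
    g • n = g • (0 : ℤ) + (g • (1 : ℤ) - g • (0 : ℤ)) * n :=
  Int.eq_add_mul_of_abs_sub_eq_one (MulAction.injective g) (hG g) n

noncomputable def orientation (hG : PreservesIntAdjacency G) : G →* ℤˣ where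
  toFun g := (Int.isUnit_iff_abs_eq.mpr (by simpa using hG g 0)).unit
  map_one' := by ext; simp
  map_mul' g h := by
    ext
    simp only [IsUnit.unit_spec, Units.val_mul, mul_smul]
    rw [hG.smul_eq_add_mul g (h • 1), hG.smul_eq_add_mul g (h • 0)]
    ring

theorem smul_eq_add_of_mem_ker {hG : PreservesIntAdjacency G} {g : G}
    (hg : g ∈ hG.orientation.ker) (n : ℤ) : g • n = g • (0 : ℤ) + n := by
  have : g • (1 : ℤ) - g • (0 : ℤ) = 1 := congrArg Units.val hg
  rw [hG.smul_eq_add_mul g n, this, one_mul]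

def translation (hG : PreservesIntAdjacency G) : hG.orientation.ker →* Multiplicative ℤ where
  toFun g := Multiplicative.ofAdd ((g : G) • (0 : ℤ))
  map_one' := by simp
  map_mul' g h := by
    simp only [Subgroup.coe_mul, mul_smul, smul_eq_add_of_mem_ker g.2 ((h : G) • 0)]
    rfl

theorem isVirtuallyCyclic (hG : PreservesIntAdjacency G)
    (hfix : {g : G | ∀ n : ℤ, g • n = n}.Finite) : IsVirtuallyCyclic G := by
  refine IsVirtuallyCyclic.of_finiteIndex (H := hG.orientation.ker) ?_
  refine isVirtuallyCyclic_of_finite_ker hG.translation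
    ((hfix.preimage Subtype.val_injective.injOn).subset fun g hg n => ?_)
  have hg0 : (g : G) • (0 : ℤ) = 0 := congrArg Multiplicative.toAdd hg
  rw [smul_eq_add_of_mem_ker g.2 n, hg0, zero_add]

end PreservesIntAdjacency

namespace SimpleGraph

variable {V : Type*} {T : SimpleGraph V} {γ : ℤ → V}

theorem IsAcyclic.eq_add_one_of_adj (hT : T.IsAcyclic) (hinj : Function.Injective γ)
    (hgeo : ∀ n, T.Adj (γ n) (γ (n + 1))) {m n : ℤ} (hmn : m < n) (hadj : T.Adj (γ m) (γ n)) :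
    n = m + 1 := by
  by_contra hne
  -- otherwise the line joins `γ m` to `γ n` without using the bridge `s(γ m, γ n)`
  have hreach : ∀ j, m ≤ j → j ≤ n →
      (T.deleteEdges {s(γ m, γ n)}).Reachable (γ m) (γ j) := by
    intro j hmj
    induction j, hmj using Int.leInduction with
    | base => exact fun _ => Reachable.refl _
    | succ j hmj ih =>
      refine fun hjn => (ih (by omega)).trans (Adj.reachable (deleteEdges_adj.mpr ⟨hgeo j, ?_⟩))
      intro he
      rcases Sym2.eq_iff.mp (Set.mem_singleton_iff.mp he) with ⟨h₁, h₂⟩ | ⟨h₁, h₂⟩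
      · have := hinj h₁; have := hinj h₂; omega
      · have := hinj h₁; have := hinj h₂; omega
  exact isBridge_iff.mp (isAcyclic_iff_forall_adj_isBridge.mp hT hadj) (hreach n hmn.le le_rfl)

theorem IsAcyclic.abs_sub_eq_one_of_adj (hT : T.IsAcyclic) (hinj : Function.Injective γ)
    (hgeo : ∀ n, T.Adj (γ n) (γ (n + 1))) {m n : ℤ} (hadj : T.Adj (γ m) (γ n)) :
    |n - m| = 1 := by
  rcases lt_trichotomy m n with hmn | rfl | hnm
  · rw [hT.eq_add_one_of_adj hinj hgeo hmn hadj]; simp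
  · exact absurd hadj T.irrefl
  · rw [abs_sub_comm, hT.eq_add_one_of_adj hinj hgeo hnm hadj.symm]; simp

end SimpleGraph

theorem IsAcylindricalAction.finite_fixing_line {Γ V : Type*} [Group Γ] [MulAction Γ V]
    {T : SimpleGraph V} (hacyl : IsAcylindricalAction Γ T) {γ : ℤ → V}
    (hinj : Function.Injective γ) (hgeo : ∀ n, T.Adj (γ n) (γ (n + 1))) :
    {g : Γ | ∀ n, g • γ n = γ n}.Finite := by
  obtain ⟨k, hk⟩ := hacyl
  refine (hk (fun i => γ (i : ℕ)) (hinj.comp (Nat.cast_injective.comp Fin.val_injective))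
    fun i => by simpa using hgeo i).subset fun g hg i => hg i

theorem stmt13_general {V : Type*} (T : SimpleGraph V) (hT : T.IsAcyclic)
    {Γ : Type*} [Group Γ] [MulAction Γ V]
    (hadj : ∀ (g : Γ) (u v : V), T.Adj u v → T.Adj (g • u) (g • v))
    (hacyl : IsAcylindricalAction Γ T)
    (γ : ℤ → V) (hinj : Function.Injective γ)
    (hgeo : ∀ n : ℤ, T.Adj (γ n) (γ (n + 1))) :
    IsVirtuallyCyclic (MulAction.stabilizer Γ (Set.range γ)) := by
  set S := MulAction.stabilizer Γ (Set.range γ)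
  let : MulAction S ℤ := (Equiv.ofInjective γ hinj).mulAction S
  have hγ : ∀ (g : S) (n : ℤ), γ (g • n) = (g : Γ) • γ n := fun g n => by
    rw [Equiv.smul_def, Equiv.apply_ofInjective_symm hinj]
    rfl
  refine PreservesIntAdjacency.isVirtuallyCyclic (fun g n => ?_) ?_
  · refine hT.abs_sub_eq_one_of_adj hinj hgeo ?_
    rw [hγ, hγ]
    exact hadj g _ _ (hgeo n)
  · refine ((hacyl.finite_fixing_line hinj hgeo).preimage Subtype.val_injective.injOn).subset
      fun g hg n => ?_
    rw [← hγ, hg n]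

/-- Let a group `Γ` act acylindrically by automorphisms on a tree `T`
(a connected acyclic simple graph). Then for every geodesic line `γ : ℤ → V(T)` in `T`,
the setwise stabilizer of `γ` in `Γ` is virtually cyclic. -/
theorem stmt13 {V : Type*} (T : SimpleGraph V) (hconn : T.Connected) (hT : T.IsAcyclic)
    {Γ : Type*} [Group Γ] [MulAction Γ V]
    (hadj : ∀ (g : Γ) (u v : V), T.Adj u v → T.Adj (g • u) (g • v))
    (hacyl : IsAcylindricalAction Γ T)
    (γ : ℤ → V) (hinj : Function.Injective γ)
    (hgeo : ∀ n : ℤ, T.Adj (γ n) (γ (n + 1))) :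
    IsVirtuallyCyclic (MulAction.stabilizer Γ (Set.range γ)) :=
  stmt13_general T hT hadj hacyl γ hinj hgeo
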